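/- arXiv:1810.01303 — 5 statements merged into one kernel-verified Lean document; each statement's English description precedes it below -/
import Mathlib

section
/- For every χ ∈ S_{n,q} one has | Σ_{f monic of degree n−1 in F_q[T]} χ(f) | = q^{(n−1)/2}; equivalently, the epsilon factor ε_χ = λ_{n−1}(χ) satisfies |ε_χ| = 1. -/
/-!
Let `R = F[x]/(x^(n+1))` and write `rₙ` for the top coefficient of `r ∈ R`. By primitivity,
`e(t) = ψ(1 + t xⁿ)` is a nontrivial additive character of `F`, and `Λ(r) = e(-rₙ)` is a
primitive additive character of `R`. For a non-unit `a` the unit `1 + t xⁿ` fixes `Λ(a ·)`, so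
the Gauss sum `G = ∑ ψ(r) Λ(r)` satisfies `|G|² = |R| = q^(n+1)` exactly as over a finite field.
On the other hand, averaging `G` over the substitutions `r ↦ r (1 + t xⁿ)` gives
`G = q ∑ ψ(r)`, the sum running over the `r` with constant coefficient `1` and top coefficient
`0`: these are exactly the reversals of the monic polynomials of degree `n - 1`.
-/

open Polynomial

noncomputable section

/-- The ring `F_q[x]/(x^(n+1))`. -/
abbrev QuotR (F : Type) [Field F] (n : ℕ) : Type :=
  Polynomial F ⧸ Ideal.span {(Polynomial.X : Polynomial F) ^ (n + 1)}

/-- The quotient map `F_q[x] → F_q[x]/(x^(n+1))`. -/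
def mkR (F : Type) [Field F] (n : ℕ) : Polynomial F →+* QuotR F n :=
  Ideal.Quotient.mk _

/-- A Dirichlet character modulo `x^(n+1)` is even if it is trivial on the constants. -/
def IsEvenChar (F : Type) [Field F] (n : ℕ) (ψ : MulChar (QuotR F n) ℂ) : Prop :=
  ∀ c : F, c ≠ 0 → ψ (mkR F n (Polynomial.C c)) = 1

/-- A Dirichlet character modulo `x^(n+1)` is primitive if it is nontrivial on the
units congruent to `1` modulo `x^n` (which are exactly the `1 + a x^n`). -/
def IsPrimitiveChar (F : Type) [Field F] (n : ℕ) (ψ : MulChar (QuotR F n) ℂ) : Prop :=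
  ∃ a : F, ψ (mkR F n (1 + Polynomial.C a * Polynomial.X ^ n)) ≠ 1

/-- The function `χ` on (monic) polynomials attached to a Dirichlet character `ψ`:
`χ(f) = ψ(f(x⁻¹) x^(deg f) mod x^(n+1))`. -/
def attachedChar (F : Type) [Field F] (n : ℕ) (ψ : MulChar (QuotR F n) ℂ) :
    Polynomial F → ℂ :=
  fun f => ψ (mkR F n f.reverse)

/-- The family `S_{n,q}` of functions attached to primitive even Dirichlet characters. -/
def Snq (F : Type) [Field F] (n : ℕ) : Set (Polynomial F → ℂ) :=
  {χ | ∃ ψ : MulChar (QuotR F n) ℂ,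
    IsEvenChar F n ψ ∧ IsPrimitiveChar F n ψ ∧ χ = attachedChar F n ψ}

/-- The sum of `χ(f)` over monic polynomials of degree `d`. -/
def coeffSum (F : Type) [Field F] (χ : Polynomial F → ℂ) (d : ℕ) : ℂ :=
  ∑ᶠ f ∈ {f : Polynomial F | f.Monic ∧ f.natDegree = d}, χ f

/-- `λ_d(χ) = q^(-d/2) ∑_{f monic, deg f = d} χ(f)`. -/
def lam (F : Type) [Field F] [Fintype F] (χ : Polynomial F → ℂ) (d : ℕ) : ℂ :=
  ((((Fintype.card F : ℝ) ^ (-(d : ℝ) / 2) : ℝ)) : ℂ) * coeffSum F χ d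

/-- The epsilon factor `ε_χ = λ_{n-1}(χ)`. -/
def epsFactor (F : Type) [Field F] [Fintype F] (n : ℕ) (χ : Polynomial F → ℂ) : ℂ :=
  lam F χ (n - 1)

/-- The L-function `L(s,χ) = ∑_{d=0}^{n-1} λ_d(χ) q^(d(1/2-s))`. -/
def Lfun (F : Type) [Field F] [Fintype F] (n : ℕ) (χ : Polynomial F → ℂ) (s : ℂ) : ℂ :=
  ∑ d ∈ Finset.range n, lam F χ d * (Fintype.card F : ℂ) ^ ((d : ℂ) * (1 / 2 - s))

open AddChar

section GaussSum

variable {R : Type*} [CommRing R] [Fintype R] {R' : Type*} [CommRing R'] [IsDomain R']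

theorem gaussSum_eq_zero_of_mulShift_eq {χ : MulChar R R'} {ψ : AddChar R R'} (u : Rˣ)
    (hχ : χ u ≠ 1) (hψ : ψ.mulShift u = ψ) : gaussSum χ ψ = 0 := by
  have h := gaussSum_mulShift χ ψ u
  rw [hψ] at h
  by_contra hG
  exact hχ ((mul_eq_right₀ hG).mp h)

omit [IsDomain R'] in
theorem gaussSum_mulShift_eq_of_forall_not_isUnit (χ : MulChar R R') (ψ : AddChar R R')
    (h : ∀ a, ¬IsUnit a → gaussSum χ (ψ.mulShift a) = 0) (b : R) :
    gaussSum χ (ψ.mulShift b) = χ⁻¹ b * gaussSum χ ψ := by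
  by_cases hb : IsUnit b
  · obtain ⟨u, rfl⟩ := hb
    exact gaussSum_mulShift_eq χ ψ u
  · rw [h b hb, χ⁻¹.map_nonunit hb, zero_mul]

theorem gaussSum_mul_gaussSum_eq_card_of_isPrimitive {χ : MulChar R R'} {ψ : AddChar R R'}
    (hψ : ψ.IsPrimitive) (h : ∀ a, ¬IsUnit a → gaussSum χ (ψ.mulShift a) = 0) :
    gaussSum χ ψ * gaussSum χ⁻¹ ψ⁻¹ = Fintype.card R := by
  classical
  calc gaussSum χ ψ * gaussSum χ⁻¹ ψ⁻¹
      = ∑ b, ψ (-b) * gaussSum χ (ψ.mulShift b) := by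
        rw [mul_comm, gaussSum, Finset.sum_mul]
        refine Finset.sum_congr rfl fun b _ => ?_
        rw [gaussSum_mulShift_eq_of_forall_not_isUnit χ ψ h, AddChar.inv_apply]
        ring
    _ = ∑ a, χ a * ∑ b, ψ (b * (a - 1)) := by
        simp only [gaussSum, Finset.mul_sum, mulShift_apply]
        rw [Finset.sum_comm]
        refine Finset.sum_congr rfl fun a _ => Finset.sum_congr rfl fun b _ => ?_
        rw [mul_left_comm, ← map_add_eq_mul]
        ring_nf
    _ = Fintype.card R := by
        simp [sum_mulShift _ hψ, sub_eq_zero]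

theorem norm_gaussSum_sq_of_isPrimitive {χ : MulChar R ℂ} {ψ : AddChar R ℂ}
    (hψ : ψ.IsPrimitive) (h : ∀ a, ¬IsUnit a → gaussSum χ (ψ.mulShift a) = 0) :
    ‖gaussSum χ ψ‖ ^ 2 = Fintype.card R := by
  have := gaussSum_mul_gaussSum_eq_card_of_isPrimitive hψ h
  rw [← star_gaussSum_eq, Complex.star_def, Complex.mul_conj'] at this
  exact_mod_cast this

end GaussSum

namespace QuotR

section

variable {F : Type} [Field F] {n : ℕ}

theorem mkR_surjective : Function.Surjective (mkR F n) := Ideal.Quotient.mk_surjective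

theorem mkR_eq_mkR_iff {f g : F[X]} : mkR F n f = mkR F n g ↔ X ^ (n + 1) ∣ f - g := by
  rw [mkR, Ideal.Quotient.mk_eq_mk_iff_sub_mem, Ideal.mem_span_singleton]

theorem mkR_eq_zero_iff {f : F[X]} : mkR F n f = 0 ↔ X ^ (n + 1) ∣ f := by
  rw [mkR, Ideal.Quotient.eq_zero_iff_mem, Ideal.mem_span_singleton]

theorem exists_mkR_eq_of_degree_lt (r : QuotR F n) :
    ∃ g : F[X], g.degree < ↑(n + 1) ∧ mkR F n g = r := by
  obtain ⟨f, rfl⟩ := mkR_surjective r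
  refine ⟨f %ₘ X ^ (n + 1), ?_, mkR_eq_mkR_iff.mpr ?_⟩
  · simpa using degree_modByMonic_lt f (monic_X_pow (n + 1))
  · exact ⟨-(f /ₘ X ^ (n + 1)), by rw [modByMonic_eq_sub_mul_div f (X ^ (n + 1))]; ring⟩

theorem mkR_injOn_degree_lt : Set.InjOn (mkR F n) {g | g.degree < ↑(n + 1)} := by
  intro f hf g hg h
  rw [← sub_eq_zero]
  refine eq_zero_of_dvd_of_degree_lt (mkR_eq_mkR_iff.mp h) ?_
  rw [degree_X_pow]
  exact (degree_sub_le f g).trans_lt (max_lt hf hg)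

instance [Finite F] : Finite (QuotR F n) :=
  have := (monic_X_pow (R := F) (n + 1)).finite_quotient
  Module.finite_of_finite F

instance [Fintype F] : Fintype (QuotR F n) := Fintype.ofFinite _

theorem card_eq [Fintype F] : Fintype.card (QuotR F n) = Fintype.card F ^ (n + 1) := by
  rw [Module.card_eq_pow_finrank (K := F), finrank_quotient_span_eq_natDegree, natDegree_X_pow]

def constCoeff (F : Type) [Field F] (n : ℕ) : QuotR F n →+* F :=
  Ideal.Quotient.lift _ (Polynomial.constantCoeff) fun _ hf => by
    obtain ⟨g, rfl⟩ := Ideal.mem_span_singleton.mp hf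
    simp

@[simp]
theorem constCoeff_mkR (f : F[X]) : constCoeff F n (mkR F n f) = f.coeff 0 := rfl

def topCoeff (F : Type) [Field F] (n : ℕ) : QuotR F n →ₗ[F] F :=
  (Submodule.liftQ _ (lcoeff F n) fun _ hf =>
    X_pow_dvd_iff.mp (Ideal.mem_span_singleton.mp hf) n n.lt_succ_self).comp
    (Submodule.Quotient.restrictScalarsEquiv F _).symm.toLinearMap

@[simp]
theorem topCoeff_mkR (f : F[X]) : topCoeff F n (mkR F n f) = f.coeff n := rfl

theorem isUnit_of_constCoeff_ne_zero {r : QuotR F n} (hr : constCoeff F n r ≠ 0) : IsUnit r := by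
  obtain ⟨f, rfl⟩ := mkR_surjective r
  have hsplit : mkR F n f = mkR F n (C (f.coeff 0)) + mkR F n (f - C (f.coeff 0)) := by
    rw [← map_add, add_sub_cancel]
  rw [hsplit]
  refine IsNilpotent.isUnit_add_left_of_commute ⟨n + 1, ?_⟩
    ((isUnit_C.mpr (Ne.isUnit hr)).map _) (Commute.all _ _)
  rw [← map_pow, mkR_eq_zero_iff]
  exact pow_dvd_pow_of_dvd X_dvd_sub_C _

theorem constCoeff_eq_zero_of_not_isUnit {r : QuotR F n} (hr : ¬IsUnit r) :
    constCoeff F n r = 0 := by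
  by_contra h
  exact hr (isUnit_of_constCoeff_ne_zero h)

theorem mul_mkR_X_pow (r : QuotR F n) :
    r * mkR F n (X ^ n) = mkR F n (C (constCoeff F n r) * X ^ n) := by
  obtain ⟨f, rfl⟩ := mkR_surjective r
  rw [← map_mul, constCoeff_mkR, mkR_eq_mkR_iff, ← sub_mul, pow_succ']
  exact mul_dvd_mul_right X_dvd_sub_C _

theorem isPrimitive_compAddMonoidHom_topCoeff {R' : Type*} [CommMonoid R'] {e : AddChar F R'}
    (he : e ≠ 1) : (e.compAddMonoidHom (topCoeff F n).toAddMonoidHom).IsPrimitive := by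
  intro r hr hshift
  obtain ⟨a, ha⟩ := AddChar.ne_one_iff.mp he
  obtain ⟨f, rfl⟩ := mkR_surjective r
  obtain ⟨k, hk, hfk⟩ : ∃ k < n + 1, f.coeff k ≠ 0 := by
    by_contra! h
    exact hr (mkR_eq_zero_iff.mpr (X_pow_dvd_iff.mpr h))
  apply ha
  have := DFunLike.congr_fun hshift (mkR F n (C (a / f.coeff k) * X ^ (n - k)))
  rwa [mulShift_apply, compAddMonoidHom_apply, ← map_mul, LinearMap.toAddMonoidHom_coe,
    topCoeff_mkR, ← mul_assoc, coeff_mul_X_pow', if_pos (Nat.sub_le n k),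
    Nat.sub_sub_self (by omega), coeff_mul_C, mul_div_cancel₀ _ hfk] at this

def oneAddTop (t : F) : QuotR F n := mkR F n (1 + C t * X ^ n)

@[simp]
theorem oneAddTop_zero : oneAddTop (n := n) (0 : F) = 1 := by
  simp [oneAddTop]

theorem mul_oneAddTop (r : QuotR F n) (t : F) :
    r * oneAddTop t = r + mkR F n (C (t * constCoeff F n r) * X ^ n) := by
  rw [oneAddTop, map_add, map_one, mul_add, mul_one, map_mul, mul_left_comm, mul_mkR_X_pow,
    ← map_mul, ← mul_assoc, ← C_mul]

theorem topCoeff_mul_oneAddTop (r : QuotR F n) (t : F) :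
    topCoeff F n (r * oneAddTop t) = topCoeff F n r + t * constCoeff F n r := by
  rw [mul_oneAddTop, map_add, topCoeff_mkR, coeff_C_mul_X_pow, if_pos rfl]

end

/- `(1 + s xⁿ) (1 + t xⁿ) = 1 + (s + t) xⁿ` needs `x^(2n) = 0`, i.e. `n ≥ 1`: from here on the
modulus is `x^(m+2)` and `n = m + 1`. -/
section

variable {F : Type} [Field F] {m : ℕ}

@[simp]
theorem constCoeff_oneAddTop (t : F) : constCoeff F (m + 1) (oneAddTop t) = 1 := by
  simp [oneAddTop]

theorem constCoeff_mul_oneAddTop (r : QuotR F (m + 1)) (t : F) :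
    constCoeff F (m + 1) (r * oneAddTop t) = constCoeff F (m + 1) r := by
  rw [map_mul, constCoeff_oneAddTop, mul_one]

theorem oneAddTop_add (s t : F) :
    oneAddTop (n := m + 1) (s + t) = oneAddTop s * oneAddTop t := by
  rw [mul_oneAddTop, constCoeff_oneAddTop, mul_one, oneAddTop, oneAddTop, ← map_add, C_add]
  ring_nf

theorem isUnit_oneAddTop (t : F) : IsUnit (oneAddTop (n := m + 1) t) :=
  isUnit_of_constCoeff_ne_zero (by simp)

def topChar (ψ : MulChar (QuotR F (m + 1)) ℂ) : AddChar F ℂ where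
  toFun t := ψ (oneAddTop t)
  map_zero_eq_one' := by simp [oneAddTop]
  map_add_eq_mul' s t := by rw [oneAddTop_add, map_mul]

/-- `Λ(r) = e(-rₙ)`. The sign makes the factor `e(-t r₀)` in `Λ(r (1 + t xⁿ)) = Λ(r) e(-t r₀)`,
`r₀` the constant coefficient, cancel `ψ(1 + t xⁿ) = e(t)` exactly when `r₀ = 1`. -/
def topCoeffChar (ψ : MulChar (QuotR F (m + 1)) ℂ) : AddChar (QuotR F (m + 1)) ℂ :=
  (topChar ψ)⁻¹.compAddMonoidHom (topCoeff F (m + 1)).toAddMonoidHom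

theorem topCoeffChar_apply (ψ : MulChar (QuotR F (m + 1)) ℂ) (r : QuotR F (m + 1)) :
    topCoeffChar ψ r = topChar ψ (-topCoeff F (m + 1) r) := rfl

theorem isPrimitive_topCoeffChar {ψ : MulChar (QuotR F (m + 1)) ℂ}
    (hψ : IsPrimitiveChar F (m + 1) ψ) :
    (topCoeffChar ψ).IsPrimitive :=
  isPrimitive_compAddMonoidHom_topCoeff (inv_ne_one.mpr (AddChar.ne_one_iff.mpr hψ))

theorem gaussSum_summand_mul_oneAddTop (ψ : MulChar (QuotR F (m + 1)) ℂ) (r : QuotR F (m + 1))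
    (t : F) :
    ψ (r * oneAddTop t) * topCoeffChar ψ (r * oneAddTop t) =
      ψ r * topCoeffChar ψ r * topChar ψ (t * (1 - constCoeff F (m + 1) r)) := by
  have hψt : ψ (oneAddTop t) = topChar ψ t := rfl
  rw [map_mul, hψt, topCoeffChar_apply, topCoeffChar_apply, topCoeff_mul_oneAddTop,
    mul_assoc, mul_assoc, ← map_add_eq_mul, ← map_add_eq_mul]
  congr 2
  ring

theorem bijOn_mkR_reverse :
    Set.BijOn (fun f : F[X] => mkR F (m + 1) f.reverse) {f | f.Monic ∧ f.natDegree = m}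
      {r | constCoeff F (m + 1) r = 1 ∧ topCoeff F (m + 1) r = 0} := by
  have hdeg {f : F[X]} (hf : f.natDegree = m) : f.reverse.degree < ↑(m + 1 + 1) :=
    (degree_le_of_natDegree_le (f.reverse_natDegree_le.trans hf.le)).trans_lt
      (by exact_mod_cast (by omega : m < m + 1 + 1))
  refine ⟨?_, ?_, ?_⟩
  · rintro f ⟨hmon, hf⟩
    refine ⟨by rw [constCoeff_mkR, coeff_zero_reverse, hmon.leadingCoeff], ?_⟩
    rw [topCoeff_mkR]
    exact coeff_eq_zero_of_natDegree_lt (f.reverse_natDegree_le.trans_lt (hf ▸ m.lt_succ_self))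
  · rintro f ⟨-, hf⟩ g ⟨-, hg⟩ h
    have hrev := mkR_injOn_degree_lt (hdeg hf) (hdeg hg) h
    rw [reverse, reverse, hf, hg] at hrev
    simpa using congrArg (reflect m) hrev
  · rintro r ⟨h0, htop⟩
    obtain ⟨g, hg, rfl⟩ := exists_mkR_eq_of_degree_lt r
    rw [constCoeff_mkR] at h0
    rw [topCoeff_mkR] at htop
    have hgm : g.natDegree ≤ m := natDegree_le_iff_coeff_eq_zero.mpr fun k hk => by
      obtain rfl | hk' := (Nat.succ_le_of_lt hk).eq_or_lt
      · exact htop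
      · exact coeff_eq_zero_of_degree_lt (hg.trans_le (Nat.cast_le.mpr hk'))
    have hcoeff : (g.reflect m).coeff m = 1 := by
      rwa [coeff_reflect, revAt_le le_rfl, Nat.sub_self]
    have hdeg' : (g.reflect m).natDegree ≤ m := natDegree_reflect_le.trans (max_le le_rfl hgm)
    have hnat : (g.reflect m).natDegree = m :=
      hdeg'.antisymm (le_natDegree_of_ne_zero (hcoeff ▸ one_ne_zero))
    refine ⟨g.reflect m, ⟨monic_of_natDegree_le_of_coeff_eq_one m hdeg' hcoeff, hnat⟩, ?_⟩
    simp only [reverse, hnat, reflect_reflect]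

end

section

variable {F : Type} [Field F] [Fintype F] {m : ℕ} {ψ : MulChar (QuotR F (m + 1)) ℂ}

theorem gaussSum_mulShift_topCoeffChar_of_not_isUnit (hψ : IsPrimitiveChar F (m + 1) ψ)
    {a : QuotR F (m + 1)} (ha : ¬IsUnit a) : gaussSum ψ ((topCoeffChar ψ).mulShift a) = 0 := by
  obtain ⟨t, ht⟩ := hψ
  refine gaussSum_eq_zero_of_mulShift_eq (isUnit_oneAddTop t).unit ht ?_
  rw [mulShift_mulShift, IsUnit.unit_spec, mul_oneAddTop, constCoeff_eq_zero_of_not_isUnit ha]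
  simp

section

variable [DecidableEq F]

theorem gaussSum_topCoeffChar_eq_sum (hψ : IsPrimitiveChar F (m + 1) ψ) :
    gaussSum ψ (topCoeffChar ψ) =
      ∑ r with constCoeff F (m + 1) r = 1, ψ r * topCoeffChar ψ r := by
  have hprim : (topChar ψ).IsPrimitive := .of_ne_one (AddChar.ne_one_iff.mpr hψ)
  have hq : (Fintype.card F : ℂ) ≠ 0 := Nat.cast_ne_zero.mpr Fintype.card_ne_zero
  refine mul_left_cancel₀ hq ?_
  calc (Fintype.card F : ℂ) * gaussSum ψ (topCoeffChar ψ)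
      = ∑ t : F, ∑ r,
          ψ r * topCoeffChar ψ r * topChar ψ (t * (1 - constCoeff F (m + 1) r)) := by
        rw [← nsmul_eq_mul, ← Finset.card_univ, ← Finset.sum_const]
        refine Finset.sum_congr rfl fun t _ => ?_
        exact (Fintype.sum_bijective _ (isUnit_oneAddTop t).unit.mulRight_bijective _ _
          fun r => (gaussSum_summand_mul_oneAddTop ψ r t).symm).symm
    _ = ∑ r,
          ψ r * topCoeffChar ψ r * ∑ t : F, topChar ψ (t * (1 - constCoeff F (m + 1) r)) := by
        rw [Finset.sum_comm]
        simp only [Finset.mul_sum]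
    _ = Fintype.card F * ∑ r with constCoeff F (m + 1) r = 1, ψ r * topCoeffChar ψ r := by
        rw [Finset.mul_sum, Finset.sum_filter]
        refine Finset.sum_congr rfl fun r _ => ?_
        simp only [sum_mulShift _ hprim, sub_eq_zero, eq_comm (a := (1 : F))]
        split_ifs <;> simp [mul_comm]

theorem sum_topCoeff_fiber_eq (t : F) :
    ∑ r with constCoeff F (m + 1) r = 1 ∧ topCoeff F (m + 1) r = t, ψ r * topCoeffChar ψ r =
      ∑ r with constCoeff F (m + 1) r = 1 ∧ topCoeff F (m + 1) r = 0, ψ r := by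
  have hcancel (r : QuotR F (m + 1)) (s : F) : r * oneAddTop s * oneAddTop (-s) = r := by
    rw [mul_assoc, ← oneAddTop_add, add_neg_cancel, oneAddTop_zero, mul_one]
  refine Finset.sum_nbij' (· * oneAddTop (-t)) (· * oneAddTop t) ?_ ?_ ?_ ?_ ?_
  · intro r hr
    simp_all [constCoeff_mul_oneAddTop, topCoeff_mul_oneAddTop]
  · intro r hr
    simp_all [constCoeff_mul_oneAddTop, topCoeff_mul_oneAddTop]
  · intro r _
    simpa using hcancel r (-t)
  · intro r _
    exact hcancel r t
  · intro r hr
    simp only [Finset.mem_filter] at hr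
    rw [topCoeffChar_apply, hr.2.2, map_mul]
    rfl

theorem sum_constCoeff_eq_one_eq_card_mul :
    ∑ r with constCoeff F (m + 1) r = 1, ψ r * topCoeffChar ψ r =
      Fintype.card F *
        ∑ r with constCoeff F (m + 1) r = 1 ∧ topCoeff F (m + 1) r = 0, ψ r := by
  rw [← Finset.sum_fiberwise _ (topCoeff F (m + 1))]
  simp only [Finset.filter_filter, sum_topCoeff_fiber_eq]
  simp

theorem coeffSum_attachedChar_eq_sum :
    coeffSum F (attachedChar F (m + 1) ψ) m =
      ∑ r with constCoeff F (m + 1) r = 1 ∧ topCoeff F (m + 1) r = 0, ψ r := by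
  rw [coeffSum, finsum_mem_eq_of_bijOn (f := attachedChar F (m + 1) ψ) (g := ψ) _
    bijOn_mkR_reverse fun _ _ => rfl, ← finsum_mem_coe_finset]
  simp only [Finset.coe_filter, Finset.mem_univ, true_and]

end

theorem norm_coeffSum_attachedChar_sq (hψ : IsPrimitiveChar F (m + 1) ψ) :
    ‖coeffSum F (attachedChar F (m + 1) ψ) m‖ ^ 2 = (Fintype.card F : ℝ) ^ m := by
  have := Classical.decEq F
  have hG := norm_gaussSum_sq_of_isPrimitive (isPrimitive_topCoeffChar hψ)
    fun _ ha => gaussSum_mulShift_topCoeffChar_of_not_isUnit hψ ha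
  rw [gaussSum_topCoeffChar_eq_sum hψ, sum_constCoeff_eq_one_eq_card_mul,
    ← coeffSum_attachedChar_eq_sum, norm_mul, mul_pow, card_eq, Complex.norm_natCast] at hG
  have hq : (0 : ℝ) < Fintype.card F := by exact_mod_cast Fintype.card_pos
  push_cast at hG
  refine mul_left_cancel₀ (pow_ne_zero 2 hq.ne') ?_
  rw [hG]
  ring

end

end QuotR

theorem statement3_general (F : Type) [Field F] [Fintype F]
    (n : ℕ) (hn : 1 ≤ n) (χ : Polynomial F → ℂ) (hχ : χ ∈ Snq F n) :
    ‖coeffSum F χ (n - 1)‖ = (Fintype.card F : ℝ) ^ (((n : ℝ) - 1) / 2) ∧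
    ‖epsFactor F n χ‖ = 1 := by
  obtain ⟨ψ, -, hψ, rfl⟩ := hχ
  obtain ⟨m, rfl⟩ := Nat.exists_eq_add_of_le' hn
  have hq : (0 : ℝ) < Fintype.card F := by exact_mod_cast Fintype.card_pos
  have hS :
      ‖coeffSum F (attachedChar F (m + 1) ψ) m‖ = (Fintype.card F : ℝ) ^ ((m : ℝ) / 2) := by
    rw [← Real.sqrt_sq (norm_nonneg _), QuotR.norm_coeffSum_attachedChar_sq hψ,
      Real.sqrt_eq_rpow, ← Real.rpow_natCast, ← Real.rpow_mul hq.le]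
    ring_nf
  rw [Nat.add_sub_cancel, epsFactor, Nat.add_sub_cancel, lam, norm_mul, Complex.norm_real,
    Real.norm_of_nonneg (by positivity), hS, ← Real.rpow_add hq, neg_div, neg_add_cancel,
    Real.rpow_zero]
  exact ⟨by push_cast; ring_nf, rfl⟩

/-- for `χ ∈ S_{n,q}`, `|∑_{f monic, deg f = n-1} χ(f)| = q^((n-1)/2)`;
equivalently `|ε_χ| = 1`. -/
theorem statement3 (p : ℕ) (hp : p.Prime) (F : Type) [Field F] [Fintype F] (hchar : CharP F p)
    (n : ℕ) (hn : 1 ≤ n) (χ : Polynomial F → ℂ) (hχ : χ ∈ Snq F n) :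
    ‖coeffSum F χ (n - 1)‖ = (Fintype.card F : ℝ) ^ (((n : ℝ) - 1) / 2) ∧
    ‖epsFactor F n χ‖ = 1 :=
  statement3_general F n hn χ hχ

end
end

section
/- (Functional equation.) For every χ ∈ S_{n,q} and every integer d with 0 ≤ d ≤ n−1, one has λ_{n−1−d}(χ) = ε_χ · conj(λ_d(χ)); equivalently, Σ_{f monic of degree n−1−d} χ(f) = q^{(n−1)/2 − d} · ε_χ · conj( Σ_{f monic of degree d} χ(f) ). -/
open Polynomial

noncomputable section

/-!
Write `n = m + 1` and `q = #F`. Reversing polynomials identifies `∑_{deg f = k} χ(f)` with the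
sum `T_k` of `ψ` over the residues of the polynomials `g` with `g(0) = 1` and `deg g ≤ k`. On the
subgroup `1 + F xⁿ` the character `ψ` restricts to an additive character `η(c) = ψ(1 + c xⁿ)` of
`F`, nontrivial by primitivity. The double sum of `ψ(w) η(-[xⁿ](v w))` over `deg v ≤ d`,
`deg w ≤ m` is computed in two ways. For fixed `v`, `ψ(v) ψ(w) η(-[xⁿ](v w)) = ψ(v w mod xⁿ)`, and
`w ↦ v w mod xⁿ` permutes the `w`; since `|ψ(v)| = 1` this gives `conj(T_d) T_m`. For fixed `w`,
the sum over `v` is the sum of `η` over a linear form in the coefficients of `v`, which is `q^d` if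
the top `d` coefficients of `w` vanish and `0` otherwise; this gives `q^d T_(m-d)`.
-/

open Finset ComplexConjugate

section QuotientRing

variable {F : Type} [Field F] {n : ℕ}

theorem mkR_eq_mkR_iff {g h : F[X]} : mkR F n g = mkR F n h ↔ X ^ (n + 1) ∣ g - h := by
  rw [mkR, Ideal.Quotient.eq, Ideal.mem_span_singleton]

theorem isCoprime_X_pow_of_coeff_zero_ne_zero {g : F[X]} (hg : g.coeff 0 ≠ 0) (k : ℕ) :
    IsCoprime (X ^ k) g :=
  ((irreducible_X.coprime_iff_not_dvd).2 (by rwa [X_dvd_iff])).pow_left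

theorem isUnit_mkR_of_coeff_zero_ne_zero {g : F[X]} (hg : g.coeff 0 ≠ 0) :
    IsUnit (mkR F n g) := by
  obtain ⟨a, b, hab⟩ := isCoprime_X_pow_of_coeff_zero_ne_zero hg (n + 1)
  refine IsUnit.of_mul_eq_one (mkR F n b) ?_
  rw [← map_mul, ← map_one (mkR F n), mkR_eq_mkR_iff]
  exact ⟨-a, by linear_combination hab⟩

instance [Finite F] : Finite (QuotR F n) :=
  have := (monic_X_pow (R := F) (n + 1)).finite_quotient
  Module.finite_of_finite F

theorem conj_mul_self_of_coeff_zero_ne_zero [Finite F] (ψ : MulChar (QuotR F n) ℂ) {g : F[X]}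
    (hg : g.coeff 0 ≠ 0) : conj (ψ (mkR F n g)) * ψ (mkR F n g) = 1 := by
  rw [starRingEnd_apply, MulChar.star_apply', ← Pi.mul_apply, ← MulChar.coeToFun_mul,
    MulChar.inv_mul, MulChar.one_apply (isUnit_mkR_of_coeff_zero_ne_zero hg)]

theorem mkR_mul_one_add_C_mul_X_pow {g : F[X]} (hg : g.coeff 0 = 1) (c : F) :
    mkR F n (g * (1 + C c * X ^ n)) = mkR F n (g + C c * X ^ n) := by
  obtain ⟨r, hr⟩ : X ∣ g - 1 := X_dvd_iff.2 (by simp [hg])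
  rw [mkR_eq_mkR_iff]
  exact ⟨C c * r, by linear_combination (C c * X ^ n) * hr⟩

theorem mkR_sub_C_coeff_mul_X_pow (p : F[X]) :
    mkR F n (p - C (p.coeff n) * X ^ n) = mkR F n (PowerSeries.trunc n (p : PowerSeries F)) := by
  rw [mkR_eq_mkR_iff, X_pow_dvd_iff]
  intro j hj
  rw [coeff_sub, coeff_sub, coeff_C_mul_X_pow, PowerSeries.coeff_trunc, coeff_coe]
  split_ifs <;> first | omega | simp_all

end QuotientRing

section UnitPolys

variable (F : Type) [Field F]

def tailPoly (k : ℕ) : (Fin k → F) →ₗ[F] F[X] :=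
  Fintype.linearCombination F fun i : Fin k => X ^ (i.val + 1)

open Classical in
def unitPolys [Fintype F] (k : ℕ) : Finset F[X] :=
  univ.image fun a : Fin k → F => 1 + tailPoly F k a

variable {F}

theorem coeff_tailPoly_zero {k : ℕ} (a : Fin k → F) : (tailPoly F k a).coeff 0 = 0 := by
  simp [tailPoly, Fintype.linearCombination_apply, coeff_X_pow]

theorem coeff_tailPoly_succ {k : ℕ} (a : Fin k → F) (i : Fin k) :
    (tailPoly F k a).coeff (i + 1) = a i := by
  simp [tailPoly, Fintype.linearCombination_apply, coeff_X_pow, Fin.val_inj]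

theorem natDegree_tailPoly_le {k : ℕ} (a : Fin k → F) : (tailPoly F k a).natDegree ≤ k := by
  rw [tailPoly, Fintype.linearCombination_apply]
  refine natDegree_sum_le_of_forall_le _ _ fun i _ => ?_
  exact (natDegree_smul_le _ _).trans (by rw [natDegree_X_pow]; omega)

theorem eq_one_add_tailPoly {k : ℕ} {g : F[X]} (h0 : g.coeff 0 = 1) (hk : g.natDegree ≤ k) :
    g = 1 + tailPoly F k fun i => g.coeff (i + 1) := by
  ext j
  rcases j with _ | j
  · simp [coeff_tailPoly_zero, h0]
  · by_cases hj : j < k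
    · simpa [coeff_one] using (coeff_tailPoly_succ (fun i : Fin k => g.coeff (i + 1)) ⟨j, hj⟩).symm
    · rw [coeff_add, coeff_one, if_neg j.succ_ne_zero, zero_add,
        coeff_eq_zero_of_natDegree_lt (by omega),
        coeff_eq_zero_of_natDegree_lt ((natDegree_tailPoly_le _).trans_lt (by omega))]

theorem mem_unitPolys [Fintype F] {k : ℕ} {g : F[X]} :
    g ∈ unitPolys F k ↔ g.coeff 0 = 1 ∧ g.natDegree ≤ k := by
  classical
  simp only [unitPolys, mem_image, mem_univ, true_and]
  constructor
  · rintro ⟨a, rfl⟩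
    refine ⟨by simp [coeff_tailPoly_zero], ?_⟩
    exact (natDegree_add_le _ _).trans (max_le (by simp) (natDegree_tailPoly_le a))
  · rintro ⟨h0, hk⟩
    exact ⟨_, (eq_one_add_tailPoly h0 hk).symm⟩

open Classical in
theorem filter_unitPolys_coeff_eq_zero [Fintype F] {m d : ℕ} (hd : d ≤ m) :
    (unitPolys F m).filter (fun w => ∀ i : Fin d, w.coeff (m - i) = 0) = unitPolys F (m - d) := by
  ext w
  simp only [mem_filter, mem_unitPolys]
  constructor
  · rintro ⟨⟨h0, hm⟩, hvanish⟩
    refine ⟨h0, natDegree_le_iff_coeff_eq_zero.2 fun j hj => ?_⟩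
    by_cases hjm : j ≤ m
    · simpa [Nat.sub_sub_self hjm] using hvanish ⟨m - j, by omega⟩
    · exact coeff_eq_zero_of_natDegree_lt (by omega)
  · rintro ⟨h0, hk⟩
    exact ⟨⟨h0, hk.trans (Nat.sub_le _ _)⟩, fun i => coeff_eq_zero_of_natDegree_lt (by omega)⟩

end UnitPolys

section Reflect

variable {F : Type} [Field F] [Fintype F]

theorem reflect_mem_unitPolys {f : F[X]} (hf : f.Monic) :
    f.reflect f.natDegree ∈ unitPolys F f.natDegree := by
  rw [mem_unitPolys, coeff_reflect, revAt_le (Nat.zero_le _), Nat.sub_zero]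
  exact ⟨hf, natDegree_reflect_le.trans (max_self _).le⟩

theorem monic_reflect_of_mem_unitPolys {k : ℕ} {g : F[X]} (hg : g ∈ unitPolys F k) :
    (g.reflect k).Monic ∧ (g.reflect k).natDegree = k := by
  rw [mem_unitPolys] at hg
  have hdeg : (g.reflect k).natDegree ≤ k := natDegree_reflect_le.trans (max_le le_rfl hg.2)
  have hlead : (g.reflect k).coeff k = 1 := by
    rw [coeff_reflect, revAt_le le_rfl, Nat.sub_self, hg.1]
  exact ⟨monic_of_natDegree_le_of_coeff_eq_one k hdeg hlead,
    natDegree_eq_of_le_of_coeff_ne_zero hdeg (hlead ▸ one_ne_zero)⟩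

theorem coeffSum_attachedChar {n : ℕ} (ψ : MulChar (QuotR F n) ℂ) (k : ℕ) :
    coeffSum F (attachedChar F n ψ) k = ∑ g ∈ unitPolys F k, ψ (mkR F n g) := by
  rw [coeffSum, ← finsum_mem_coe_finset]
  refine finsum_mem_eq_of_bijOn (reflect k) (Set.InvOn.bijOn (f' := reflect k) ?_ ?_ ?_) ?_
  · exact ⟨fun f _ => reflect_reflect, fun g _ => reflect_reflect⟩
  · rintro f ⟨hf, rfl⟩
    exact reflect_mem_unitPolys hf
  · intro g hg
    exact monic_reflect_of_mem_unitPolys hg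
  · rintro f ⟨-, rfl⟩
    rfl

end Reflect

theorem sum_addChar_comp_linearMap {K V R : Type*} [Field K] [AddCommGroup V] [Module K V]
    [Fintype V] [CommRing R] [IsDomain R] {η : AddChar K R} (hη : η ≠ 1) (L : V →ₗ[K] K)
    [Decidable (L = 0)] : ∑ v, η (L v) = if L = 0 then (Fintype.card V : R) else 0 := by
  split_ifs with hL
  · simp [hL]
  obtain ⟨c, hc⟩ := AddChar.ne_one_iff.1 hη
  obtain ⟨v, hv⟩ : ∃ v, L v ≠ 0 := by simpa [DFunLike.ext_iff] using hL
  refine AddChar.sum_eq_zero_of_ne_one (ψ := η.compAddMonoidHom L.toAddMonoidHom) ?_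
  refine AddChar.ne_one_iff.2 ⟨(c / L v) • v, ?_⟩
  simpa [hv] using hc

section LevelChar

variable {F : Type} [Field F] {m : ℕ}

def levelChar (ψ : MulChar (QuotR F (m + 1)) ℂ) : AddChar F ℂ where
  toFun c := ψ (mkR F (m + 1) (1 + C c * X ^ (m + 1)))
  map_zero_eq_one' := by simp
  map_add_eq_mul' b c := by
    rw [← map_mul, ← map_mul]
    congr 1
    exact mkR_eq_mkR_iff.2 ⟨-(C (b * c) * X ^ m), by rw [C_add, C_mul]; ring⟩

theorem levelChar_ne_one {ψ : MulChar (QuotR F (m + 1)) ℂ} (hψ : IsPrimitiveChar F (m + 1) ψ) :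
    levelChar ψ ≠ 1 :=
  AddChar.ne_one_iff.2 hψ

variable [Fintype F]

open Classical in
theorem sum_levelChar_unitPolys {ψ : MulChar (QuotR F (m + 1)) ℂ}
    (hψ : IsPrimitiveChar F (m + 1) ψ) {d : ℕ} (hd : d ≤ m) {w : F[X]} (hw : w.natDegree ≤ m) :
    ∑ v ∈ unitPolys F d, levelChar ψ (-(v * w).coeff (m + 1)) =
      if ∀ i : Fin d, w.coeff (m - i) = 0 then (Fintype.card F : ℂ) ^ d else 0 := by
  have hinj : Function.Injective fun a : Fin d → F => 1 + tailPoly F d a := fun a b h =>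
    funext fun i => by simpa [coeff_tailPoly_succ] using congrArg (coeff · (i + 1)) h
  let L : (Fin d → F) →ₗ[F] F := -(lcoeff F (m + 1) ∘ₗ LinearMap.mulRight F w ∘ₗ tailPoly F d)
  have hL : ∀ a, -((1 + tailPoly F d a) * w).coeff (m + 1) = L a := fun a => by
    simp [L, add_mul, coeff_eq_zero_of_natDegree_lt (hw.trans_lt m.lt_succ_self)]
  have hL_single : ∀ i x, L (Pi.single i x) = -(x * w.coeff (m - i)) := fun i x => by
    simp [L, tailPoly, Fintype.linearCombination_apply_single, coeff_X_pow_mul',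
      show (i : ℕ) + 1 ≤ m + 1 by omega]
  have hL0 : L = 0 ↔ ∀ i : Fin d, w.coeff (m - i) = 0 := by
    refine ⟨fun h i => by simpa [hL_single] using congrArg (· (Pi.single i 1)) h, fun h => ?_⟩
    exact LinearMap.pi_ext fun i x => by simp [hL_single, h i]
  rw [unitPolys, sum_image fun a _ b _ h => hinj h]
  simp_rw [hL]
  rw [sum_addChar_comp_linearMap (levelChar_ne_one hψ), Fintype.card_fun, Fintype.card_fin]
  simp [hL0]

theorem sum_mul_levelChar_unitPolys (ψ : MulChar (QuotR F (m + 1)) ℂ) {v : F[X]}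
    (hv : v.coeff 0 = 1) :
    ∑ w ∈ unitPolys F m, ψ (mkR F (m + 1) w) * levelChar ψ (-(v * w).coeff (m + 1)) =
      conj (ψ (mkR F (m + 1) v)) * ∑ w ∈ unitPolys F m, ψ (mkR F (m + 1) w) := by
  set Φ : F[X] → F[X] := fun w => PowerSeries.trunc (m + 1) (v * w : F[X]) with hΦ
  have hΦ_apply : ∀ w ∈ unitPolys F m,
      ψ (mkR F (m + 1) v) * (ψ (mkR F (m + 1) w) * levelChar ψ (-(v * w).coeff (m + 1))) =
        ψ (mkR F (m + 1) (Φ w)) := fun w hw => by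
    have hvw : (v * w).coeff 0 = 1 := by rw [mul_coeff_zero, hv, (mem_unitPolys.1 hw).1, one_mul]
    change _ * (_ * ψ (mkR F (m + 1) (1 + _))) = _
    rw [← map_mul, ← map_mul, ← map_mul, ← map_mul, ← mul_assoc, mkR_mul_one_add_C_mul_X_pow hvw,
      C_neg, neg_mul, ← sub_eq_add_neg, mkR_sub_C_coeff_mul_X_pow]
  have hmaps : Set.MapsTo Φ (unitPolys F m) (unitPolys F m) := fun w hw => by
    rw [mem_coe, mem_unitPolys] at hw ⊢
    refine ⟨?_, Nat.lt_succ_iff.1 (PowerSeries.natDegree_trunc_lt _ m)⟩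
    rw [hΦ, PowerSeries.coeff_trunc, if_pos m.succ_pos, coeff_coe, mul_coeff_zero, hv, hw.1,
      one_mul]
  have hinj : Set.InjOn Φ (unitPolys F m) := fun w hw w' hw' h => by
    rw [mem_coe, mem_unitPolys] at hw hw'
    have hdvd : X ^ (m + 1) ∣ v * (w - w') := X_pow_dvd_iff.2 fun j hj => by
      have := congrArg (coeff · j) h
      simp only [hΦ, PowerSeries.coeff_trunc, if_pos hj, coeff_coe] at this
      rw [mul_sub, coeff_sub, this, sub_self]
    have hdvd' :=
      (isCoprime_X_pow_of_coeff_zero_ne_zero (hv ▸ one_ne_zero) _).dvd_of_dvd_mul_left hdvd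
    refine sub_eq_zero.1 (eq_zero_of_dvd_of_natDegree_lt hdvd' ?_)
    rw [natDegree_X_pow]
    exact (natDegree_sub_le _ _).trans_lt (Nat.lt_succ_iff.2 (max_le hw.2 hw'.2))
  have hsum : ∑ w ∈ unitPolys F m, ψ (mkR F (m + 1) (Φ w)) =
      ∑ w ∈ unitPolys F m, ψ (mkR F (m + 1) w) :=
    sum_nbij Φ hmaps hinj (((unitPolys F m).finite_toSet.injOn_iff_bijOn_of_mapsTo hmaps).1
      hinj).surjOn fun _ _ => rfl
  calc _ = conj (ψ (mkR F (m + 1) v)) * ψ (mkR F (m + 1) v) *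
        ∑ w ∈ unitPolys F m, ψ (mkR F (m + 1) w) * levelChar ψ (-(v * w).coeff (m + 1)) := by
        rw [conj_mul_self_of_coeff_zero_ne_zero ψ (hv ▸ one_ne_zero), one_mul]
    _ = _ := by rw [mul_assoc, mul_sum, sum_congr rfl hΦ_apply, hsum]

open Classical in
theorem card_pow_mul_sum_unitPolys {ψ : MulChar (QuotR F (m + 1)) ℂ}
    (hψ : IsPrimitiveChar F (m + 1) ψ) {d : ℕ} (hd : d ≤ m) :
    (Fintype.card F : ℂ) ^ d * ∑ w ∈ unitPolys F (m - d), ψ (mkR F (m + 1) w) =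
      conj (∑ v ∈ unitPolys F d, ψ (mkR F (m + 1) v)) *
        ∑ w ∈ unitPolys F m, ψ (mkR F (m + 1) w) := by
  calc _ = ∑ w ∈ unitPolys F m, ψ (mkR F (m + 1) w) *
        if ∀ i : Fin d, w.coeff (m - i) = 0 then (Fintype.card F : ℂ) ^ d else 0 := by
        rw [← filter_unitPolys_coeff_eq_zero hd, sum_filter, mul_sum]
        exact sum_congr rfl fun w _ => by split_ifs <;> ring
    _ = ∑ w ∈ unitPolys F m, ∑ v ∈ unitPolys F d,
          ψ (mkR F (m + 1) w) * levelChar ψ (-(v * w).coeff (m + 1)) :=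
        sum_congr rfl fun w hw => by
          rw [← mul_sum, sum_levelChar_unitPolys hψ hd (mem_unitPolys.1 hw).2]
    _ = ∑ v ∈ unitPolys F d, conj (ψ (mkR F (m + 1) v)) *
          ∑ w ∈ unitPolys F m, ψ (mkR F (m + 1) w) := by
        rw [sum_comm]
        exact sum_congr rfl fun v hv => sum_mul_levelChar_unitPolys ψ (mem_unitPolys.1 hv).1
    _ = _ := by rw [← sum_mul, map_sum]

end LevelChar

theorem lam_and_coeffSum_of_card_pow_mul {F : Type} [Field F] [Fintype F] (χ : F[X] → ℂ)
    {m d : ℕ} (hd : d ≤ m)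
    (h : (Fintype.card F : ℂ) ^ d * coeffSum F χ (m - d) = conj (coeffSum F χ d) * coeffSum F χ m) :
    lam F χ (m - d) = lam F χ m * conj (lam F χ d) ∧
      coeffSum F χ (m - d) = ((Fintype.card F : ℝ) ^ ((m : ℝ) / 2 - d) : ℝ) *
        (lam F χ m * conj (coeffSum F χ d)) := by
  have hq : (0 : ℝ) < Fintype.card F := by exact_mod_cast Fintype.card_pos
  set q : ℝ := (Fintype.card F : ℝ)
  have h₁ : q ^ (-((m - d : ℕ) : ℝ) / 2) = q ^ (-(m : ℝ) / 2) * q ^ (-(d : ℝ) / 2) * q ^ d := by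
    rw [← Real.rpow_natCast, ← Real.rpow_add hq, ← Real.rpow_add hq]
    congr 1
    push_cast [hd]
    ring
  have h₂ : q ^ ((m : ℝ) / 2 - d) * q ^ (-(m : ℝ) / 2) * q ^ d = 1 := by
    rw [← Real.rpow_natCast, ← Real.rpow_add hq, ← Real.rpow_add hq, ← Real.rpow_zero q]
    congr 1
    ring
  have h₁' := congrArg (fun x : ℝ => (x : ℂ)) h₁
  have h₂' := congrArg (fun x : ℝ => (x : ℂ)) h₂
  simp only [Complex.ofReal_mul, Complex.ofReal_pow, Complex.ofReal_one] at h₁' h₂'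
  simp only [lam, map_mul, Complex.conj_ofReal]
  constructor
  · linear_combination ((q ^ (-(m : ℝ) / 2) : ℝ) * ((q ^ (-(d : ℝ) / 2) : ℝ) : ℂ)) * h +
      coeffSum F χ (m - d) * h₁'
  · linear_combination ((q ^ ((m : ℝ) / 2 - d) : ℝ) * ((q ^ (-(m : ℝ) / 2) : ℝ) : ℂ)) * h -
      coeffSum F χ (m - d) * h₂'

theorem statement4_general (F : Type) [Field F] [Fintype F]
    (n : ℕ) (hn : 1 ≤ n) (χ : Polynomial F → ℂ) (hχ : χ ∈ Snq F n)
    (d : ℕ) (hd : d ≤ n - 1) :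
    lam F χ (n - 1 - d) = epsFactor F n χ * (starRingEnd ℂ) (lam F χ d) ∧
    coeffSum F χ (n - 1 - d) =
      ((((Fintype.card F : ℝ) ^ (((n : ℝ) - 1) / 2 - (d : ℝ)) : ℝ)) : ℂ) *
        (epsFactor F n χ * (starRingEnd ℂ) (coeffSum F χ d)) := by
  obtain ⟨m, rfl⟩ := Nat.exists_eq_add_of_le' hn
  obtain ⟨ψ, -, hψ, rfl⟩ := hχ
  rw [Nat.add_sub_cancel] at hd ⊢
  rw [epsFactor, Nat.add_sub_cancel, Nat.cast_succ, add_sub_cancel_right]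
  refine lam_and_coeffSum_of_card_pow_mul _ hd ?_
  simp only [coeffSum_attachedChar]
  exact card_pow_mul_sum_unitPolys hψ hd

/-- functional equation: for `χ ∈ S_{n,q}` and `0 ≤ d ≤ n-1`,
`λ_{n-1-d}(χ) = ε_χ ⬝ conj(λ_d(χ))`; equivalently
`∑_{f monic, deg f = n-1-d} χ(f) = q^((n-1)/2 - d) ε_χ conj(∑_{f monic, deg f = d} χ(f))`. -/
theorem statement4 (p : ℕ) (hp : p.Prime) (F : Type) [Field F] [Fintype F] (hchar : CharP F p)
    (n : ℕ) (hn : 1 ≤ n) (χ : Polynomial F → ℂ) (hχ : χ ∈ Snq F n)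
    (d : ℕ) (hd : d ≤ n - 1) :
    lam F χ (n - 1 - d) = epsFactor F n χ * (starRingEnd ℂ) (lam F χ d) ∧
    coeffSum F χ (n - 1 - d) =
      ((((Fintype.card F : ℝ) ^ (((n : ℝ) - 1) / 2 - (d : ℝ)) : ℝ)) : ℂ) *
        (epsFactor F n χ * (starRingEnd ℂ) (coeffSum F χ d)) :=
  statement4_general F n hn χ hχ d hd

end
end

section
/- Let R be a commutative ring, let n ≥ 1 and k ≥ 1 be integers, and let c : ℤ → R be a function with c_j = 0 whenever j < 0 or j > n−1. Then the following identity holds in the polynomial ring R[β_1, …, β_k]: ( Σ_{σ ∈ S_k} sgn(σ) ∏_{i=1}^k β_i^{σ(i)−1} ) · ( Σ_{(e_1,…,e_k) ∈ {0,…,n−1}^k} ∏_{i=1}^k β_i^{e_i} · ∏_{i=1}^k c_{e_i} ) = Σ_{σ ∈ S_k} Σ_{0 ≤ d_1 ≤ d_2 ≤ ⋯ ≤ d_k ≤ n−1} sgn(σ) ( ∏_{i=1}^k β_{σ(i)}^{d_i + i − 1} ) · det( c_{d_i + i − j} )_{1≤i,j≤k}. -/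
/-! Multiplying the alternant `∑_σ sgn σ β^σ` by `∏_i ∑_a c_a β_i^a` and collecting monomials,
the coefficient of `β^F` is `∑_σ sgn σ ∏_i c_{F_i - σ(i)} = det (c_{F_i - j})`. This determinant
has two equal rows unless `F` is injective, and an injective `F` is uniquely `(d + id) ∘ σ⁻¹`
with `σ` the permutation sorting `F` and `d` weakly increasing; undoing `σ` on the rows of the
determinant contributes `sgn σ`. -/

open Finset MvPolynomial Equiv

section Combinatorics

variable {M : Type*} [AddCommMonoid M] {k : ℕ}

theorem Fin.apply_add_le_apply_add_of_strictMono {g : Fin k → ℕ} (hg : StrictMono g) {i j : Fin k}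
    (hij : i ≤ j) : g i + j ≤ g j + i := by
  cases k with
  | zero => exact i.elim0
  | succ k =>
    induction j using Fin.induction with
    | zero => simp [nonpos_iff_eq_zero.mp hij]
    | succ j ih =>
      rcases hij.lt_or_eq with hlt | rfl
      · have hstep : g j.castSucc < g j.succ := hg Fin.castSucc_lt_succ
        have := ih (Fin.le_castSucc_iff.mpr hlt)
        simp only [Fin.val_succ, Fin.val_castSucc] at *
        omega
      · exact le_rfl

theorem Fin.val_le_of_strictMono {g : Fin k → ℕ} (hg : StrictMono g) (i : Fin k) :
    (i : ℕ) ≤ g i := by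
  have := Fin.apply_add_le_apply_add_of_strictMono hg (i := ⟨0, i.pos⟩) (j := i)
    (Fin.le_def.mpr (by simp))
  simp only at this
  omega

theorem sum_filter_injective_eq_sum_perm_strictMono {α : Type*} [LinearOrder α] (t : Finset α)
    (φ : (Fin k → α) → M) :
    ∑ F ∈ Fintype.piFinset (fun _ => t) with Function.Injective F, φ F =
      ∑ σ : Perm (Fin k), ∑ g ∈ Fintype.piFinset (fun _ => t) with StrictMono g,
        φ (g ∘ ⇑σ⁻¹) := by
  rw [← sum_product']
  refine sum_nbij' (fun F => (Tuple.sort F, F ∘ Tuple.sort F)) (fun p => p.2 ∘ ⇑p.1⁻¹)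
    ?_ ?_ ?_ ?_ ?_
  · intro F hF
    simp only [mem_filter, Fintype.mem_piFinset, mem_product, mem_univ, true_and] at hF ⊢
    exact ⟨fun i => hF.1 _,
      (Tuple.monotone_sort F).strictMono_of_injective (hF.2.comp (Tuple.sort F).injective)⟩
  · rintro ⟨σ, g⟩ hg
    simp only [mem_filter, Fintype.mem_piFinset, mem_product, mem_univ, true_and] at hg ⊢
    exact ⟨fun i => hg.1 _, hg.2.injective.comp (σ⁻¹).injective⟩
  · intro F _
    ext i
    simp
  · rintro ⟨σ, g⟩ hg
    simp only [mem_filter, Fintype.mem_piFinset, mem_product, mem_univ, true_and] at hg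
    have hσ : σ = Tuple.sort (g ∘ ⇑σ⁻¹) := by
      rw [Tuple.eq_sort_iff]
      refine ⟨?_, fun i j hij heq => ?_⟩
      · simpa [Function.comp_def] using hg.2.monotone
      · simp only [Perm.coe_inv, Function.comp_apply, symm_apply_apply] at heq
        exact absurd (hg.2.injective heq) hij.ne
    simp only [← hσ, Prod.mk.injEq, true_and]
    ext i
    simp
  · intro F _
    simp [Function.comp_assoc]

theorem sum_filter_strictMono_eq_sum_filter_monotone (m : ℕ) (ψ : (Fin k → ℕ) → M) :
    ∑ g ∈ Fintype.piFinset (fun _ : Fin k => range (m + k)) with StrictMono g, ψ g =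
      ∑ d ∈ Fintype.piFinset (fun _ : Fin k => range (m + 1)) with Monotone d,
        ψ (fun i => d i + i) := by
  symm
  refine sum_nbij' (fun d i => d i + i) (fun g i => g i - i) ?_ ?_ ?_ ?_ (fun _ _ => rfl)
  · intro d hd
    simp only [mem_filter, Fintype.mem_piFinset, mem_range] at hd ⊢
    refine ⟨fun i => by have := hd.1 i; omega, fun i j hij => ?_⟩
    have := hd.2 hij.le
    have : (i : ℕ) < j := hij
    dsimp only
    omega
  · intro g hg
    simp only [mem_filter, Fintype.mem_piFinset, mem_range] at hg ⊢
    have hlow := Fin.val_le_of_strictMono hg.2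
    refine ⟨fun i => ?_, fun i j hij => ?_⟩
    · have hk : k - 1 < k := by have := i.isLt; omega
      have hgap := Fin.apply_add_le_apply_add_of_strictMono hg.2 (i := i) (j := ⟨k - 1, hk⟩)
        (Fin.le_def.mpr (by have := i.isLt; simp only; omega))
      have := hg.1 ⟨k - 1, hk⟩
      simp only at hgap
      omega
    · have := Fin.apply_add_le_apply_add_of_strictMono hg.2 hij
      have : (i : ℕ) ≤ j := hij
      have := hlow i
      dsimp only
      omega
  · intro d _
    ext i
    simp
  · intro g hg
    simp only [mem_filter] at hg
    ext i
    have := Fin.val_le_of_strictMono hg.2 i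
    simp only
    omega

end Combinatorics

theorem pow_mul_sum_range_eq_sum_range_sub {S : Type*} [CommSemiring S] (x : S) (f : ℤ → S)
    {n s N : ℕ} (hf : ∀ j : ℤ, j < 0 ∨ n ≤ j → f j = 0) (hN : s + n ≤ N) :
    x ^ s * ∑ a ∈ range n, x ^ a * f a = ∑ b ∈ range N, x ^ b * f (b - s) := by
  have hsub : Ico s (s + n) ⊆ range N := fun b hb => by
    simp only [mem_Ico, mem_range] at hb ⊢; omega
  rw [← sum_subset hsub, sum_Ico_eq_sum_range, Nat.add_sub_cancel_left, mul_sum]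
  · refine sum_congr rfl fun a _ => ?_
    push_cast
    rw [add_sub_cancel_left, pow_add, mul_assoc]
  · intro b _ hb
    simp only [mem_Ico, not_and_or, not_le, not_lt] at hb
    rw [hf _ (by omega), mul_zero]

variable {R : Type*} [CommRing R] {k : ℕ}

def jacobiTrudiMatrix (c : ℤ → R) (F : Fin k → ℕ) : Matrix (Fin k) (Fin k) R :=
  Matrix.of fun i j => c ((F i : ℤ) - (j : ℕ))

theorem det_jacobiTrudiMatrix (c : ℤ → R) (F : Fin k → ℕ) :
    (jacobiTrudiMatrix c F).det =
      ∑ σ : Perm (Fin k), ((Perm.sign σ : ℤ) : R) * ∏ i, c ((F i : ℤ) - (σ i : ℕ)) := by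
  rw [← Matrix.det_transpose, Matrix.det_apply']
  rfl

theorem det_jacobiTrudiMatrix_eq_zero_of_not_injective (c : ℤ → R) {F : Fin k → ℕ}
    (hF : ¬Function.Injective F) : (jacobiTrudiMatrix c F).det = 0 := by
  obtain ⟨i, j, hFij, hij⟩ := Function.not_injective_iff.mp hF
  exact Matrix.det_zero_of_row_eq hij (funext fun l => by simp [jacobiTrudiMatrix, hFij])

theorem det_jacobiTrudiMatrix_comp_perm (c : ℤ → R) (g : Fin k → ℕ) (σ : Perm (Fin k)) :
    (jacobiTrudiMatrix c (g ∘ ⇑σ⁻¹)).det = Perm.sign σ * (jacobiTrudiMatrix c g).det := by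
  rw [show jacobiTrudiMatrix c (g ∘ ⇑σ⁻¹) = (jacobiTrudiMatrix c g).submatrix (⇑σ⁻¹) id from rfl,
    Matrix.det_permute, Perm.sign_inv]

theorem prod_X_pow_mul_sum_pi_eq_sum_piFinset (c : ℤ → R) {n N : ℕ}
    (hc : ∀ j : ℤ, j < 0 ∨ n ≤ j → c j = 0) (s : Fin k → ℕ) (hs : ∀ i, s i + n ≤ N) :
    (∏ i, X i ^ s i) *
        ∑ e : Fin k → Fin n, (∏ i, X i ^ (e i : ℕ)) * C (∏ i, c ((e i : ℕ) : ℤ)) =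
      ∑ F ∈ Fintype.piFinset (fun _ : Fin k => range N),
        (∏ i, X i ^ F i) * C (∏ i, c ((F i : ℤ) - s i)) := by
  have hfactor : ∀ i, X i ^ s i * ∑ a : Fin n, X i ^ (a : ℕ) * C (c ((a : ℕ) : ℤ)) =
      ∑ b ∈ range N, X (R := R) i ^ b * C (c ((b : ℤ) - s i)) := fun i => by
    rw [Fin.sum_univ_eq_sum_range (fun a => X i ^ a * C (c (a : ℤ)))]
    exact pow_mul_sum_range_eq_sum_range_sub _ (C ∘ c) (fun j hj => by simp [hc j hj]) (hs i)
  calc _ = ∏ i, (X i ^ s i * ∑ a : Fin n, X i ^ (a : ℕ) * C (c ((a : ℕ) : ℤ))) := by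
        simp only [prod_mul_distrib, Fintype.prod_sum, map_prod]
    _ = _ := by
        simp only [hfactor, prod_univ_sum, prod_mul_distrib, map_prod]

theorem sum_sign_mul_prod_X_pow_mul_sum_pi_eq (c : ℤ → R) {n N : ℕ}
    (hc : ∀ j : ℤ, j < 0 ∨ n ≤ j → c j = 0) (hN : n + k ≤ N + 1) :
    (∑ σ : Perm (Fin k), ((Perm.sign σ : ℤ) : MvPolynomial (Fin k) R) *
        ∏ i, X i ^ (σ i : ℕ)) *
      ∑ e : Fin k → Fin n, (∏ i, X i ^ (e i : ℕ)) * C (∏ i, c ((e i : ℕ) : ℤ)) =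
    ∑ F ∈ Fintype.piFinset (fun _ : Fin k => range N),
      (∏ i, X i ^ F i) * C (jacobiTrudiMatrix c F).det := by
  rw [sum_mul]
  calc _ = ∑ σ : Perm (Fin k), ∑ F ∈ Fintype.piFinset (fun _ : Fin k => range N),
        ((Perm.sign σ : ℤ) : MvPolynomial (Fin k) R) *
          ((∏ i, X i ^ F i) * C (∏ i, c ((F i : ℤ) - (σ i : ℕ)))) := by
        refine sum_congr rfl fun σ _ => ?_
        rw [mul_assoc, prod_X_pow_mul_sum_pi_eq_sum_piFinset c hc (N := N) (fun i => σ i)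
          (fun i => by have := (σ i).isLt; omega), mul_sum]
    _ = _ := by
        rw [sum_comm]
        refine sum_congr rfl fun F _ => ?_
        rw [det_jacobiTrudiMatrix, map_sum, mul_sum]
        refine sum_congr rfl fun σ _ => ?_
        rw [map_mul, map_intCast]
        ring

theorem prod_X_pow_mul_C_det_comp_perm (c : ℤ → R) (g : Fin k → ℕ) (σ : Perm (Fin k)) :
    (∏ i, X i ^ (g ∘ ⇑σ⁻¹) i) * C (jacobiTrudiMatrix c (g ∘ ⇑σ⁻¹)).det =
      ((Perm.sign σ : ℤ) : MvPolynomial (Fin k) R) * (∏ i, X (σ i) ^ g i) *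
        C (jacobiTrudiMatrix c g).det := by
  have hX : ∏ i, X (R := R) i ^ (g ∘ ⇑σ⁻¹) i = ∏ i, X (σ i) ^ g i := by
    rw [← Equiv.prod_comp σ]
    simp
  rw [hX, det_jacobiTrudiMatrix_comp_perm, map_mul, map_intCast, mul_left_comm, mul_assoc]

theorem statement7_general (R : Type) [CommRing R] (n k : ℕ) (hn : 1 ≤ n)
    (c : ℤ → R) (hc : ∀ j : ℤ, (j < 0 ∨ (n : ℤ) - 1 < j) → c j = 0) :
    (∑ σ : Equiv.Perm (Fin k),
        ((Equiv.Perm.sign σ : ℤ) : MvPolynomial (Fin k) R) *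
          ∏ i : Fin k, MvPolynomial.X i ^ (σ i : ℕ)) *
      (∑ e : Fin k → Fin n,
        (∏ i : Fin k, MvPolynomial.X i ^ (e i : ℕ)) *
          MvPolynomial.C (∏ i : Fin k, c ((e i : ℕ) : ℤ))) =
    ∑ σ : Equiv.Perm (Fin k),
      ∑ᶠ d ∈ {d : Fin k → ℕ | Monotone d ∧ ∀ i, d i ≤ n - 1},
        ((Equiv.Perm.sign σ : ℤ) : MvPolynomial (Fin k) R) *
          (∏ i : Fin k, MvPolynomial.X (σ i) ^ (d i + (i : ℕ))) *
          MvPolynomial.C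
            (Matrix.det (Matrix.of fun i j : Fin k =>
              c ((d i : ℤ) + ((i : ℕ) : ℤ) - ((j : ℕ) : ℤ)))) := by
  classical
  obtain ⟨m, rfl⟩ : ∃ m, n = m + 1 := ⟨n - 1, by omega⟩
  have hc' : ∀ j : ℤ, j < 0 ∨ m + 1 ≤ j → c j = 0 := fun j hj => hc j (by push_cast; omega)
  have hbox : {d : Fin k → ℕ | Monotone d ∧ ∀ i, d i ≤ m + 1 - 1} =
      ↑({d ∈ Fintype.piFinset (fun _ : Fin k => range (m + 1)) | Monotone d}) := by
    ext d
    simp only [Set.mem_ofPred_eq, coe_filter, Fintype.mem_piFinset, mem_range, Nat.add_sub_cancel,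
      Nat.lt_succ_iff, and_comm]
  rw [sum_sign_mul_prod_X_pow_mul_sum_pi_eq c hc' (n := m + 1) (N := m + k) (by omega),
    ← sum_filter_of_ne (p := Function.Injective) fun F _ h => by
      contrapose! h
      rw [det_jacobiTrudiMatrix_eq_zero_of_not_injective c h, map_zero, mul_zero],
    sum_filter_injective_eq_sum_perm_strictMono]
  refine sum_congr rfl fun σ _ => ?_
  rw [hbox, finsum_mem_coe_finset, sum_filter_strictMono_eq_sum_filter_monotone]
  refine sum_congr rfl fun d _ => ?_
  rw [prod_X_pow_mul_C_det_comp_perm]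
  simp only [jacobiTrudiMatrix, Nat.cast_add]

/-- the Jacobi–Trudi generating identity in `R[β_1,…,β_k]` (0-indexed):
`(∑_σ sgn σ ∏_i β_i^{σ(i)-1}) (∑_e ∏_i β_i^{e_i} ∏_i c_{e_i})
  = ∑_σ ∑_{0 ≤ d_1 ≤ ⋯ ≤ d_k ≤ n-1} sgn σ (∏_i β_{σ(i)}^{d_i+i-1}) det(c_{d_i+i-j})`. -/
theorem statement7 (R : Type) [CommRing R] (n k : ℕ) (hn : 1 ≤ n) (hk : 1 ≤ k)
    (c : ℤ → R) (hc : ∀ j : ℤ, (j < 0 ∨ (n : ℤ) - 1 < j) → c j = 0) :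
    (∑ σ : Equiv.Perm (Fin k),
        ((Equiv.Perm.sign σ : ℤ) : MvPolynomial (Fin k) R) *
          ∏ i : Fin k, MvPolynomial.X i ^ (σ i : ℕ)) *
      (∑ e : Fin k → Fin n,
        (∏ i : Fin k, MvPolynomial.X i ^ (e i : ℕ)) *
          MvPolynomial.C (∏ i : Fin k, c ((e i : ℕ) : ℤ))) =
    ∑ σ : Equiv.Perm (Fin k),
      ∑ᶠ d ∈ {d : Fin k → ℕ | Monotone d ∧ ∀ i, d i ≤ n - 1},
        ((Equiv.Perm.sign σ : ℤ) : MvPolynomial (Fin k) R) *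
          (∏ i : Fin k, MvPolynomial.X (σ i) ^ (d i + (i : ℕ))) *
          MvPolynomial.C
            (Matrix.det (Matrix.of fun i j : Fin k =>
              c ((d i : ℤ) + ((i : ℕ) : ℤ) - ((j : ℕ) : ℤ)))) :=
  statement7_general R n k hn c hc
end

section
/- Let k ≥ 1, let z_1, …, z_k be complex numbers with |z_i| = 1 for all i, and let d_1 < d_2 < ⋯ < d_k be integers. Then | det( z_i^{d_j} )_{1≤i,j≤k} | ≤ ( ∏_{1≤i<j≤k} |z_i − z_j| ) · ( ∏_{1≤i<j≤k} (d_j − d_i) ) / ( ∏_{i=1}^{k} (i−1)! ). Equivalently, | Σ_{σ ∈ S_k} sgn(σ) ∏_{i=1}^k z_i^{d_{σ(i)}} | is bounded by the right-hand side. -/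
/-!
Induct on `k`. Dividing all `z i` by `z 0` changes neither side, so assume `z 0 = 1`. Subtracting
adjacent columns, expanding along the row of `z 0`, and writing
`z ^ b - z ^ a = (z - 1) * ∑ e ∈ Ico a b, z ^ e` gives the branching rule
`det (z i ^ d j) = ∏ i > 0, (z i - 1) * ∑ r, det (z i ^ r j)_{i, j > 0}` over the integer sequences
`r` interlacing `d`. The same column operations on the matrix `(descPochhammer i).eval (d j)`, whose
determinant is the Vandermonde product of `d`, give the dimension counterpart
`∏ i < j, (d j - d i) = (k - 1)! * ∑ r, ∏ i < j, (r j - r i)`. The triangle inequality and the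
induction hypothesis for each `r` then close the induction.
-/

open Finset Matrix Polynomial

theorem Finset.sum_Ico_sub_int {M : Type*} [AddCommGroup M] (g : ℤ → M) {a b : ℤ} (hab : a ≤ b) :
    ∑ e ∈ Ico a b, (g (e + 1) - g e) = g b - g a := by
  induction b, hab using Int.leInduction with
  | base => simp
  | succ b hab ih =>
    rw [← insert_Ico_right_eq_Ico_add_one hab, sum_insert (by simp), ih]
    abel

theorem zpow_sub_zpow_eq_mul_sum_Ico {K : Type*} [DivisionRing K] {z : K} (hz : z ≠ 0)
    {a b : ℤ} (hab : a ≤ b) : z ^ b - z ^ a = (z - 1) * ∑ e ∈ Ico a b, z ^ e := by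
  rw [mul_sum, ← sum_Ico_sub_int _ hab]
  refine sum_congr rfl fun e _ => ?_
  rw [zpow_add_one₀ hz, sub_mul, one_mul, (Commute.self_zpow₀ z e).eq]

theorem descPochhammer_eval_add_one_sub {R : Type*} [CommRing R] (m : ℕ) (x : R) :
    (descPochhammer R (m + 1)).eval (x + 1) - (descPochhammer R (m + 1)).eval x
      = (m + 1) * (descPochhammer R m).eval x := by
  rw [descPochhammer_succ_eval m x, descPochhammer_succ_left]
  simp only [eval_mul, eval_X, eval_comp, eval_sub, eval_one, add_sub_cancel_right]
  ring

theorem descPochhammer_eval_sub_eq_mul_sum_Ico {R : Type*} [CommRing R] (m : ℕ) {a b : ℤ}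
    (hab : a ≤ b) :
    (descPochhammer R (m + 1)).eval (b : R) - (descPochhammer R (m + 1)).eval (a : R)
      = (m + 1) * ∑ e ∈ Ico a b, (descPochhammer R m).eval (e : R) := by
  rw [mul_sum, ← sum_Ico_sub_int (fun e : ℤ => (descPochhammer R (m + 1)).eval (e : R)) hab]
  refine sum_congr rfl fun e _ => ?_
  rw [Int.cast_add, Int.cast_one, descPochhammer_eval_add_one_sub]

theorem Matrix.det_of_sum_eq_sum_piFinset {R ι n : Type*} [CommRing R] [Fintype n]
    [DecidableEq n] [DecidableEq ι] (E : n → Finset ι) (f : n → ι → R) :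
    det (of fun i j => ∑ e ∈ E j, f i e)
      = ∑ r ∈ Fintype.piFinset E, det (of fun i j => f i (r j)) := by
  rw [← det_transpose]
  have h := (detRowAlternating (R := R) (n := n)).toMultilinearMap.map_sum_finset
    (fun j e i => f i e) E
  convert h using 1
  · congr 1; ext j i; simp
  · refine sum_congr rfl fun r _ => ?_
    rw [← det_transpose]; rfl

theorem Matrix.det_eq_det_succ_sub_castSucc_of_row_zero_eq_one {R : Type*} [CommRing R] {n : ℕ}
    (M : Matrix (Fin (n + 1)) (Fin (n + 1)) R) (h0 : ∀ j, M 0 j = 1) :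
    M.det = det (of fun i j : Fin n => M i.succ j.succ - M i.succ j.castSucc) := by
  let B : Matrix (Fin (n + 1)) (Fin (n + 1)) R :=
    of fun i => Fin.cons (M i 0) fun j => M i j.succ - M i j.castSucc
  rw [det_eq_of_forall_col_eq_smul_add_pred (A := M) (B := B) 1 (fun i => rfl)
    (fun i j => by simp [B]), det_succ_row_zero, Fin.sum_univ_succ]
  simp only [Fin.coe_ofNat_eq_mod, Nat.zero_mod, pow_zero, of_apply, h0, sub_self,
    Fin.cons_zero, mul_one, Fin.succAbove_zero, one_mul, Fin.cons_succ, mul_zero, zero_mul,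
    sum_const_zero, add_zero, B]
  rfl

theorem Matrix.det_eq_prod_mul_sum_det_of_row_zero_eq_one {R ι : Type*} [CommRing R]
    [DecidableEq ι] {n : ℕ} (M : Matrix (Fin (n + 1)) (Fin (n + 1)) R) (h0 : ∀ j, M 0 j = 1)
    (c : Fin n → R) (E : Fin n → Finset ι) (f : Fin n → ι → R)
    (hM : ∀ i j, M i.succ j.succ - M i.succ j.castSucc = c i * ∑ e ∈ E j, f i e) :
    M.det = (∏ i, c i) * ∑ r ∈ Fintype.piFinset E, det (of fun i j => f i (r j)) := by
  rw [det_eq_det_succ_sub_castSucc_of_row_zero_eq_one M h0, ← det_of_sum_eq_sum_piFinset,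
    ← det_mul_column]
  simp only [hM, of_apply]

theorem Matrix.det_of_descPochhammer_eval {R : Type*} [CommRing R] [IsDomain R] {n : ℕ}
    (v : Fin n → R) :
    det (of fun i j : Fin n => (descPochhammer R i).eval (v j))
      = ∏ i, ∏ j ∈ Ioi i, (v j - v i) := by
  rw [← det_vandermonde, det_eval_matrixOfPolynomials_eq_det_vandermonde v _
    (fun i => descPochhammer_natDegree _ _) (fun i => monic_descPochhammer _ _), ← det_transpose]
  rfl

theorem Fin.prod_univ_prod_Ioi_succ {M : Type*} [CommMonoid M] {n : ℕ}
    (f : Fin (n + 1) → Fin (n + 1) → M) :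
    ∏ i, ∏ j ∈ Ioi i, f i j
      = (∏ j : Fin n, f 0 j.succ) * ∏ i : Fin n, ∏ j ∈ Ioi i, f i.succ j.succ := by
  simp [Fin.prod_univ_succ, Fin.prod_Ioi_succ]

-- With `d j = λ j + j` and `r j = μ j + j` this is the interlacing `λ j ≤ μ j ≤ λ (j + 1)`
-- of the branching rule from `GL (n + 1)` to `GL n`.
noncomputable def interlacing {n : ℕ} (d : Fin (n + 1) → ℤ) : Finset (Fin n → ℤ) :=
  Fintype.piFinset fun j => Ico (d j.castSucc) (d j.succ)

theorem strictMono_of_mem_interlacing {n : ℕ} {d : Fin (n + 1) → ℤ} (hd : Monotone d)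
    {r : Fin n → ℤ} (hr : r ∈ interlacing d) : StrictMono r := by
  rw [interlacing, Fintype.mem_piFinset] at hr
  intro p q hpq
  have h1 := (mem_Ico.mp (hr p)).2
  have h2 := (mem_Ico.mp (hr q)).1
  have h3 : d p.succ ≤ d q.castSucc := hd (Fin.succ_le_castSucc_iff.mpr hpq)
  omega

theorem prod_Ioi_sub_eq_factorial_mul_sum_interlacing {n : ℕ} (d : Fin (n + 1) → ℤ)
    (hd : Monotone d) :
    ∏ i, ∏ j ∈ Ioi i, (d j - d i)
      = n.factorial * ∑ r ∈ interlacing d, ∏ i, ∏ j ∈ Ioi i, (r j - r i) := by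
  have hfact : ∏ i : Fin n, ((i : ℤ) + 1) = n.factorial := by
    rw [Fin.prod_univ_eq_prod_range (fun i => (i : ℤ) + 1)]
    exact_mod_cast prod_range_add_one_eq_factorial n
  rw [← det_of_descPochhammer_eval, det_eq_prod_mul_sum_det_of_row_zero_eq_one _
    (by simp) (fun i => (i : ℤ) + 1) (fun j => Ico (d j.castSucc) (d j.succ))
    (fun i e => (descPochhammer ℤ i).eval e), hfact]
  · simp only [interlacing, det_of_descPochhammer_eval]
  · intro i j
    simpa using descPochhammer_eval_sub_eq_mul_sum_Ico (R := ℤ) i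
      (hd (Fin.castSucc_le_succ j))

theorem det_zpow_eq_prod_mul_sum_interlacing {K : Type*} [Field K] {n : ℕ}
    (z : Fin (n + 1) → K) (hz : ∀ i, z i ≠ 0) (h0 : z 0 = 1) (d : Fin (n + 1) → ℤ)
    (hd : Monotone d) :
    det (of fun i j => z i ^ d j)
      = (∏ i : Fin n, (z i.succ - 1)) * ∑ r ∈ interlacing d, det (of fun i j => z i.succ ^ r j) :=
  det_eq_prod_mul_sum_det_of_row_zero_eq_one _ (by simp [h0]) _ _ _ fun i j =>
    zpow_sub_zpow_eq_mul_sum_Ico (hz _) (hd (Fin.castSucc_le_succ j))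

theorem norm_det_zpow_div_eq {k : ℕ} (z : Fin k → ℂ) (d : Fin k → ℤ) {c : ℂ} (hc : ‖c‖ = 1) :
    ‖det (of fun i j => (z i / c) ^ d j)‖ = ‖det (of fun i j => z i ^ d j)‖ := by
  have h := det_mul_row (fun j => (c ^ d j)⁻¹) (of fun i j => z i ^ d j)
  simp only [of_apply] at h
  simp_rw [div_zpow, div_eq_inv_mul]
  rw [h, norm_mul, norm_prod]
  simp [hc]

theorem prod_norm_sub_div_eq {k : ℕ} (z : Fin k → ℂ) {c : ℂ} (hc : ‖c‖ = 1) :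
    ∏ i, ∏ j ∈ Ioi i, ‖z i / c - z j / c‖ = ∏ i, ∏ j ∈ Ioi i, ‖z i - z j‖ := by
  simp_rw [← sub_div, norm_div, hc, div_one]

theorem norm_det_zpow_mul_prod_factorial_le_of_zero_eq_one {n : ℕ} (z : Fin (n + 1) → ℂ)
    (hz : ∀ i, ‖z i‖ = 1) (h0 : z 0 = 1) (d : Fin (n + 1) → ℤ) (hd : Monotone d)
    (hr_bound : ∀ r ∈ interlacing d,
      ‖det (of fun i j => z i.succ ^ r j)‖ * ∏ i : Fin n, ((i : ℕ).factorial : ℝ)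
      ≤ (∏ i : Fin n, ∏ j ∈ Ioi i, ‖z i.succ - z j.succ‖) *
          ∏ i : Fin n, ∏ j ∈ Ioi i, ((r j - r i : ℤ) : ℝ)) :
    ‖det (of fun i j => z i ^ d j)‖ * ∏ i : Fin (n + 1), ((i : ℕ).factorial : ℝ)
      ≤ (∏ i, ∏ j ∈ Ioi i, ‖z i - z j‖) * ∏ i, ∏ j ∈ Ioi i, ((d j - d i : ℤ) : ℝ) := by
  have hz0 : ∀ i, z i ≠ 0 := fun i => norm_ne_zero_iff.mp (by simp [hz])
  have hdim : ∏ i, ∏ j ∈ Ioi i, ((d j - d i : ℤ) : ℝ)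
      = n.factorial * ∑ r ∈ interlacing d, ∏ i, ∏ j ∈ Ioi i, ((r j - r i : ℤ) : ℝ) := by
    exact_mod_cast congrArg (Int.cast : ℤ → ℝ) (prod_Ioi_sub_eq_factorial_mul_sum_interlacing d hd)
  rw [det_zpow_eq_prod_mul_sum_interlacing z hz0 h0 d hd, hdim, Fin.prod_univ_prod_Ioi_succ,
    Fin.prod_univ_castSucc, norm_mul, norm_prod]
  have hsum : ‖∑ r ∈ interlacing d, det (of fun i j => z i.succ ^ r j)‖
        * ∏ i : Fin n, ((i : ℕ).factorial : ℝ)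
      ≤ ∑ r ∈ interlacing d, (∏ i : Fin n, ∏ j ∈ Ioi i, ‖z i.succ - z j.succ‖) *
          ∏ i : Fin n, ∏ j ∈ Ioi i, ((r j - r i : ℤ) : ℝ) := by
    refine le_trans ?_ (sum_le_sum hr_bound)
    rw [← sum_mul]
    gcongr
    exact norm_sum_le _ _
  calc (∏ i : Fin n, ‖z i.succ - 1‖) * ‖∑ r ∈ interlacing d, det (of fun i j => z i.succ ^ r j)‖
        * ((∏ i : Fin n, ((i : ℕ).factorial : ℝ)) * n.factorial)
      = (∏ i : Fin n, ‖z i.succ - 1‖) * (‖∑ r ∈ interlacing d, det (of fun i j => z i.succ ^ r j)‖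
          * ∏ i : Fin n, ((i : ℕ).factorial : ℝ)) * n.factorial := by ring
    _ ≤ (∏ i : Fin n, ‖z i.succ - 1‖) * (∑ r ∈ interlacing d,
          (∏ i : Fin n, ∏ j ∈ Ioi i, ‖z i.succ - z j.succ‖) *
            ∏ i : Fin n, ∏ j ∈ Ioi i, ((r j - r i : ℤ) : ℝ)) * n.factorial := by gcongr
    _ = _ := by
        rw [← mul_sum, h0]
        simp only [norm_sub_rev (1 : ℂ)]
        ring

theorem norm_det_zpow_mul_prod_factorial_le {k : ℕ} (z : Fin k → ℂ) (hz : ∀ i, ‖z i‖ = 1)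
    (d : Fin k → ℤ) (hd : Monotone d) :
    ‖det (of fun i j => z i ^ d j)‖ * ∏ i : Fin k, ((i : ℕ).factorial : ℝ)
      ≤ (∏ i, ∏ j ∈ Ioi i, ‖z i - z j‖) * ∏ i, ∏ j ∈ Ioi i, ((d j - d i : ℤ) : ℝ) := by
  induction k with
  | zero => simp
  | succ n ih =>
    rw [← norm_det_zpow_div_eq z d (hz 0), ← prod_norm_sub_div_eq z (hz 0)]
    refine norm_det_zpow_mul_prod_factorial_le_of_zero_eq_one _ (fun i => ?_) ?_ d hd
      fun r hr => ih _ (fun i => ?_) r (strictMono_of_mem_interlacing hd hr).monotone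
    · simp [hz]
    · simp [norm_ne_zero_iff.mp (by simp [hz] : ‖z 0‖ ≠ 0)]
    · simp [hz]

theorem statement13_general (k : ℕ) (z : Fin k → ℂ)
    (hz : ∀ i, ‖z i‖ = 1) (d : Fin k → ℤ) (hd : StrictMono d) :
    ‖Matrix.det (Matrix.of fun i j : Fin k => z i ^ d j)‖ ≤
      (∏ i : Fin k, ∏ j ∈ Finset.Ioi i, ‖z i - z j‖) *
        (∏ i : Fin k, ∏ j ∈ Finset.Ioi i, ((d j - d i : ℤ) : ℝ)) /
        ∏ i : Fin k, ((i : ℕ).factorial : ℝ) := by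
  rw [le_div_iff₀ (prod_pos fun i _ => by positivity)]
  exact norm_det_zpow_mul_prod_factorial_le z hz d hd.monotone

/-- for unimodular `z_1, …, z_k` and integers `d_1 < ⋯ < d_k`,
`|det(z_i^{d_j})| ≤ (∏_{i<j} |z_i - z_j|) (∏_{i<j} (d_j - d_i)) / ∏_i (i-1)!`
(the Weyl character/dimension bound). -/
theorem statement13 (k : ℕ) (hk : 1 ≤ k) (z : Fin k → ℂ)
    (hz : ∀ i, ‖z i‖ = 1) (d : Fin k → ℤ) (hd : StrictMono d) :
    ‖Matrix.det (Matrix.of fun i j : Fin k => z i ^ d j)‖ ≤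
      (∏ i : Fin k, ∏ j ∈ Finset.Ioi i, ‖z i - z j‖) *
        (∏ i : Fin k, ∏ j ∈ Finset.Ioi i, ((d j - d i : ℤ) : ℝ)) /
        ∏ i : Fin k, ((i : ℕ).factorial : ℝ) :=
  statement13_general k z hz d hd
end

section
/- Let e_1, e_2, e_3, e_4 be natural numbers with e_1 + e_2 = e_3 + e_4. Then the number of quadruples (a, b, c, d) of natural numbers with a + b = e_1, c + d = e_2, a + c = e_3, and b + d = e_4 equals min(e_1, e_2, e_3, e_4) + 1. -/
/-! A table `(a, b, c, d)` with prescribed margins is determined by its corner entry `a`, and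
`a` takes exactly the values with `c₁ - r₂ ≤ a ≤ min r₁ c₁`; when `r₁ + r₂ = c₁ + c₂` this
interval has `min (min r₁ r₂) (min c₁ c₂) + 1` elements. -/

/-- The `2 × 2` tables `[[a, b], [c, d]]` of naturals with row sums `r₁, r₂` and column sums
`c₁, c₂`, encoded as `(a, b, c, d)`. -/
def contingencyTables (r₁ r₂ c₁ c₂ : ℕ) : Set (ℕ × ℕ × ℕ × ℕ) :=
  {x | x.1 + x.2.1 = r₁ ∧ x.2.2.1 + x.2.2.2 = r₂ ∧ x.1 + x.2.2.1 = c₁ ∧ x.2.1 + x.2.2.2 = c₂}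

theorem injOn_fst_contingencyTables (r₁ r₂ c₁ c₂ : ℕ) :
    Set.InjOn Prod.fst (contingencyTables r₁ r₂ c₁ c₂) := by
  rintro ⟨a, b, c, d⟩ ⟨hb, hd, hc, -⟩ ⟨a', b', c', d'⟩ ⟨hb', hd', hc', -⟩ (rfl : a = a')
  dsimp only at hb hd hc hb' hd' hc'
  simp only [Prod.mk.injEq, true_and]
  omega

theorem fst_image_contingencyTables {r₁ r₂ c₁ c₂ : ℕ} (h : r₁ + r₂ = c₁ + c₂) :
    Prod.fst '' contingencyTables r₁ r₂ c₁ c₂ = Set.Icc (c₁ - r₂) (min r₁ c₁) := by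
  ext a
  simp only [contingencyTables, Set.mem_image, Set.mem_ofPred_eq, Set.mem_Icc, Prod.exists,
    exists_and_right, exists_eq_right]
  constructor
  · rintro ⟨b, c, d, hb, hd, hc, -⟩
    omega
  · rintro ⟨hlo, hhi⟩
    exact ⟨r₁ - a, c₁ - a, r₂ - (c₁ - a), by omega, by omega, by omega, by omega⟩

/-- for natural numbers with `e₁ + e₂ = e₃ + e₄`, the number of
quadruples `(a,b,c,d)` of naturals with `a+b = e₁`, `c+d = e₂`, `a+c = e₃`,
`b+d = e₄` is `min(e₁,e₂,e₃,e₄) + 1`. -/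
theorem statement15 (e₁ e₂ e₃ e₄ : ℕ) (h : e₁ + e₂ = e₃ + e₄) :
    Set.ncard {x : ℕ × ℕ × ℕ × ℕ |
        x.1 + x.2.1 = e₁ ∧ x.2.2.1 + x.2.2.2 = e₂ ∧
        x.1 + x.2.2.1 = e₃ ∧ x.2.1 + x.2.2.2 = e₄} =
      min (min e₁ e₂) (min e₃ e₄) + 1 := by
  change (contingencyTables e₁ e₂ e₃ e₄).ncard = _
  rw [← (injOn_fst_contingencyTables e₁ e₂ e₃ e₄).ncard_image,
    fst_image_contingencyTables h, ← Finset.coe_Icc, Set.ncard_coe_finset, Nat.card_Icc]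
  omega
end
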